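/- arXiv:1604.04423 — 11 statements merged into one kernel-verified Lean document; each statement's English description precedes it below -/
import Mathlib

section
/- For all natural numbers n ≥ 1 and r ≥ 1 there exists a constant c = c(r,n) > 0 such that for any two n-tuples X and Y of real polynomials in n variables, each component having total degree at most r and zero constant coefficient, the composition satisfies ⫴Y ∘ X⫴ ≤ ⫴Y⫴ · max(⫴X⫴, ⫴X⫴^r) · c. -/
/-!
The ℓ¹ norm of the coefficients, `l1Norm`, is subadditive, submultiplicative and dominates every
coefficient; and a polynomial in `n` variables of degree `≤ r` has at most `M = M(n, r)`
monomials, so its ℓ¹ norm is at most `M` times its largest coefficient. Expanding `Y ∘ X` monomial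
by monomial, each monomial `X^d` of `Y` has `1 ≤ |d| ≤ r` because `Y` has no constant term, so its
ℓ¹ norm is at most `(M ⫴X⫴)^|d| ≤ M^r max(⫴X⫴, ⫴X⫴^r)`.
-/

open MvPolynomial

/-- The coefficient norm of an `n`-tuple of real polynomials in `n` variables:
the supremum (= maximum) of the absolute values of all monomial coefficients
of all components. -/
noncomputable def coeffNorm {n : ℕ} (P : Fin n → MvPolynomial (Fin n) ℝ) : ℝ :=
  ⨆ i : Fin n, ⨆ d : Fin n →₀ ℕ, |MvPolynomial.coeff d (P i)|

/-- The composition `Y ∘ X` of `n`-tuples of polynomials: substitute the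
components of `X` for the variables in each component of `Y`. -/
noncomputable def polyComp {n : ℕ} (Y X : Fin n → MvPolynomial (Fin n) ℝ) :
    Fin n → MvPolynomial (Fin n) ℝ :=
  fun i => MvPolynomial.bind₁ X (Y i)

lemma pow_le_max_self_pow {x : ℝ} (hx : 0 ≤ x) {k r : ℕ} (hk : 1 ≤ k) (hkr : k ≤ r) :
    x ^ k ≤ max x (x ^ r) := by
  rcases le_total x 1 with hx1 | hx1
  · exact le_max_of_le_left (pow_le_of_le_one hx hx1 (by omega))
  · exact le_max_of_le_right (pow_le_pow_right₀ hx1 hkr)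

namespace MvPolynomial

variable {σ τ : Type*}

noncomputable def l1Norm (p : MvPolynomial σ ℝ) : ℝ :=
  ∑ d ∈ p.support, |coeff d p|

lemma l1Norm_nonneg (p : MvPolynomial σ ℝ) : 0 ≤ l1Norm p :=
  Finset.sum_nonneg fun _ _ => abs_nonneg _

lemma l1Norm_eq_sum_of_support_subset {p : MvPolynomial σ ℝ} {s : Finset (σ →₀ ℕ)}
    (hs : p.support ⊆ s) : l1Norm p = ∑ d ∈ s, |coeff d p| :=
  Finset.sum_subset hs fun d _ hd => by rw [notMem_support_iff.mp hd, abs_zero]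

lemma l1Norm_zero : l1Norm (0 : MvPolynomial σ ℝ) = 0 := by
  simp [l1Norm]

lemma l1Norm_monomial (d : σ →₀ ℕ) (a : ℝ) : l1Norm (monomial d a) = |a| := by
  classical
  rw [l1Norm_eq_sum_of_support_subset support_monomial_subset, Finset.sum_singleton,
    coeff_monomial, if_pos rfl]

lemma l1Norm_one : l1Norm (1 : MvPolynomial σ ℝ) = 1 := by
  rw [one_def, l1Norm_monomial, abs_one]

lemma l1Norm_smul (a : ℝ) (p : MvPolynomial σ ℝ) : l1Norm (a • p) = |a| * l1Norm p := by
  rw [l1Norm_eq_sum_of_support_subset support_smul, l1Norm, Finset.mul_sum]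
  simp only [coeff_smul, smul_eq_mul, abs_mul]

lemma abs_coeff_le_l1Norm (p : MvPolynomial σ ℝ) (d : σ →₀ ℕ) : |coeff d p| ≤ l1Norm p := by
  classical
  rw [l1Norm_eq_sum_of_support_subset (Finset.subset_insert d p.support)]
  exact Finset.single_le_sum (f := fun d => |coeff d p|) (fun _ _ => abs_nonneg _)
    (Finset.mem_insert_self d _)

lemma l1Norm_le_card_mul {p : MvPolynomial σ ℝ} {s : Finset (σ →₀ ℕ)} {B : ℝ}
    (hs : p.support ⊆ s) (hB : ∀ d, |coeff d p| ≤ B) : l1Norm p ≤ s.card * B := by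
  rw [l1Norm_eq_sum_of_support_subset hs, ← nsmul_eq_mul, ← Finset.sum_const]
  exact Finset.sum_le_sum fun d _ => hB d

lemma l1Norm_add_le (p q : MvPolynomial σ ℝ) : l1Norm (p + q) ≤ l1Norm p + l1Norm q := by
  classical
  rw [l1Norm_eq_sum_of_support_subset support_add,
    l1Norm_eq_sum_of_support_subset (Finset.subset_union_left (s₂ := q.support)),
    l1Norm_eq_sum_of_support_subset (Finset.subset_union_right (s₁ := p.support)),
    ← Finset.sum_add_distrib]
  exact Finset.sum_le_sum fun d _ => (coeff_add d p q).symm ▸ abs_add_le _ _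

lemma l1Norm_sum_le {ι : Type*} (s : Finset ι) (f : ι → MvPolynomial σ ℝ) :
    l1Norm (∑ i ∈ s, f i) ≤ ∑ i ∈ s, l1Norm (f i) :=
  Finset.le_sum_of_subadditive l1Norm l1Norm_zero.le l1Norm_add_le s f

lemma l1Norm_mul_le (p q : MvPolynomial σ ℝ) : l1Norm (p * q) ≤ l1Norm p * l1Norm q := by
  calc l1Norm (p * q)
      ≤ ∑ a ∈ p.support, ∑ b ∈ q.support, l1Norm (monomial (a + b) (coeff a p * coeff b q)) := by
        rw [mul_def]
        exact (l1Norm_sum_le _ _).trans (Finset.sum_le_sum fun a _ => l1Norm_sum_le _ _)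
    _ = l1Norm p * l1Norm q := by
        simp only [l1Norm_monomial, abs_mul]
        exact (Finset.sum_mul_sum _ _ _ _).symm

lemma l1Norm_prod_le {ι : Type*} (s : Finset ι) (f : ι → MvPolynomial σ ℝ) :
    l1Norm (∏ i ∈ s, f i) ≤ ∏ i ∈ s, l1Norm (f i) := by
  classical
  induction s using Finset.induction_on with
  | empty => rw [Finset.prod_empty, Finset.prod_empty, l1Norm_one]
  | insert a s ha ih =>
    rw [Finset.prod_insert ha, Finset.prod_insert ha]
    exact (l1Norm_mul_le _ _).trans (mul_le_mul_of_nonneg_left ih (l1Norm_nonneg _))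

lemma l1Norm_pow_le (p : MvPolynomial σ ℝ) (k : ℕ) : l1Norm (p ^ k) ≤ l1Norm p ^ k := by
  simpa using l1Norm_prod_le (Finset.range k) fun _ => p

lemma l1Norm_prod_pow_le {X : σ → MvPolynomial τ ℝ} {A : ℝ} (hX : ∀ j, l1Norm (X j) ≤ A)
    (d : σ →₀ ℕ) : l1Norm (∏ j ∈ d.support, X j ^ d j) ≤ A ^ d.degree := by
  rw [Finsupp.degree_apply, ← Finset.prod_pow_eq_pow_sum]
  refine (l1Norm_prod_le _ _).trans
    (Finset.prod_le_prod (fun j _ => l1Norm_nonneg _) fun j _ => ?_)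
  exact (l1Norm_pow_le _ _).trans (pow_le_pow_left₀ (l1Norm_nonneg _) (hX j) _)

lemma l1Norm_bind₁_le {X : σ → MvPolynomial τ ℝ} {p : MvPolynomial σ ℝ} {r : ℕ} {A : ℝ}
    (hp : p.totalDegree ≤ r) (hp0 : constantCoeff p = 0) (hX : ∀ j, l1Norm (X j) ≤ A) :
    l1Norm (bind₁ X p) ≤ l1Norm p * max A (A ^ r) := by
  have hmonomial : ∀ d ∈ p.support, l1Norm (∏ j ∈ d.support, X j ^ d j) ≤ max A (A ^ r) := by
    intro d hd
    have hd0 : d ≠ 0 := by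
      rintro rfl
      exact mem_support_iff.mp hd (by rwa [← constantCoeff_eq])
    obtain ⟨j, -⟩ := Finsupp.support_nonempty_iff.mpr hd0
    have hA : 0 ≤ A := (l1Norm_nonneg _).trans (hX j)
    have hdeg : 1 ≤ d.degree :=
      Nat.one_le_iff_ne_zero.mpr (mt (Finsupp.degree_eq_zero_iff d).mp hd0)
    exact (l1Norm_prod_pow_le hX d).trans
      (pow_le_max_self_pow hA hdeg ((le_totalDegree hd).trans hp))
  conv_lhs => rw [p.as_sum, map_sum]
  calc l1Norm (∑ d ∈ p.support, bind₁ X (monomial d (coeff d p)))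
      ≤ ∑ d ∈ p.support, |coeff d p| * l1Norm (∏ j ∈ d.support, X j ^ d j) := by
        simp only [bind₁_monomial, C_mul', ← l1Norm_smul]
        exact l1Norm_sum_le _ _
    _ ≤ ∑ d ∈ p.support, |coeff d p| * max A (A ^ r) :=
        Finset.sum_le_sum fun d hd => mul_le_mul_of_nonneg_left (hmonomial d hd) (abs_nonneg _)
    _ = l1Norm p * max A (A ^ r) := (Finset.sum_mul _ _ _).symm

end MvPolynomial

section CoeffNorm

variable {n : ℕ}

lemma coeffNorm_nonneg (P : Fin n → MvPolynomial (Fin n) ℝ) : 0 ≤ coeffNorm P :=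
  Real.iSup_nonneg fun _ => Real.iSup_nonneg fun _ => abs_nonneg _

lemma abs_coeff_le_coeffNorm (P : Fin n → MvPolynomial (Fin n) ℝ) (i : Fin n) (d : Fin n →₀ ℕ) :
    |coeff d (P i)| ≤ coeffNorm P := by
  have hbdd : BddAbove (Set.range fun e => |coeff e (P i)|) :=
    ⟨l1Norm (P i), Set.forall_mem_range.mpr (abs_coeff_le_l1Norm (P i))⟩
  exact (le_ciSup hbdd d).trans
    (le_ciSup (f := fun j => ⨆ e, |coeff e (P j)|) (Set.finite_range _).bddAbove i)

lemma coeffNorm_le {P : Fin n → MvPolynomial (Fin n) ℝ} {B : ℝ} (hB : 0 ≤ B)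
    (h : ∀ i d, |coeff d (P i)| ≤ B) : coeffNorm P ≤ B :=
  Real.iSup_le (fun i => Real.iSup_le (h i) hB) hB

lemma l1Norm_le_card_mul_coeffNorm {P : Fin n → MvPolynomial (Fin n) ℝ} {i : Fin n} {r : ℕ}
    (hP : (P i).totalDegree ≤ r) :
    l1Norm (P i) ≤ (Finsupp.finite_of_degree_le (σ := Fin n) r).toFinset.card * coeffNorm P :=
  l1Norm_le_card_mul (fun _ hd => (Finsupp.finite_of_degree_le r).mem_toFinset.mpr
    ((le_totalDegree hd).trans hP)) (abs_coeff_le_coeffNorm P i)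

end CoeffNorm

theorem coeffNorm_comp_le_general (n r : ℕ) (hr : 1 ≤ r) :
    ∃ c : ℝ, 0 < c ∧
      ∀ X Y : Fin n → MvPolynomial (Fin n) ℝ,
        (∀ i, (X i).totalDegree ≤ r) → (∀ i, MvPolynomial.constantCoeff (X i) = 0) →
        (∀ i, (Y i).totalDegree ≤ r) → (∀ i, MvPolynomial.constantCoeff (Y i) = 0) →
        coeffNorm (polyComp Y X) ≤
          coeffNorm Y * max (coeffNorm X) (coeffNorm X ^ r) * c := by
  set M : ℝ := ↑(Finsupp.finite_of_degree_le (σ := Fin n) r).toFinset.card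
  have hM : 1 ≤ M := Nat.one_le_cast.mpr <| Finset.card_pos.mpr
    ⟨0, by simp only [Set.Finite.mem_toFinset, Set.mem_ofPred_eq, map_zero, zero_le]⟩
  refine ⟨M ^ (r + 1), by positivity, fun X Y hXd _ hYd hY0 => ?_⟩
  set B := coeffNorm X
  have hB : 0 ≤ B := coeffNorm_nonneg X
  have hY : 0 ≤ coeffNorm Y := coeffNorm_nonneg Y
  have hmax : max (M * B) ((M * B) ^ r) ≤ M ^ r * max B (B ^ r) := by
    rw [mul_pow]
    exact max_le (mul_le_mul (le_self_pow₀ hM (by omega)) (le_max_left _ _) hB (by positivity))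
      (mul_le_mul_of_nonneg_left (le_max_right _ _) (by positivity))
  refine coeffNorm_le (by positivity) fun i d => ?_
  calc |coeff d (polyComp Y X i)| ≤ l1Norm (bind₁ X (Y i)) := abs_coeff_le_l1Norm _ d
    _ ≤ l1Norm (Y i) * max (M * B) ((M * B) ^ r) :=
        l1Norm_bind₁_le (hYd i) (hY0 i) fun j => l1Norm_le_card_mul_coeffNorm (hXd j)
    _ ≤ (M * coeffNorm Y) * (M ^ r * max B (B ^ r)) :=
        mul_le_mul (l1Norm_le_card_mul_coeffNorm (hYd i)) hmax (by positivity) (by positivity)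
    _ = coeffNorm Y * max B (B ^ r) * M ^ (r + 1) := by ring

/-- For `n ≥ 1`, `r ≥ 1`, there is `c = c(r,n) > 0` such that for any
two `n`-tuples `X`, `Y` of real polynomials in `n` variables, each component of total
degree at most `r` with zero constant coefficient,
`⫴Y ∘ X⫴ ≤ ⫴Y⫴ · max(⫴X⫴, ⫴X⫴^r) · c`. -/
theorem coeffNorm_comp_le (n r : ℕ) (hn : 1 ≤ n) (hr : 1 ≤ r) :
    ∃ c : ℝ, 0 < c ∧
      ∀ X Y : Fin n → MvPolynomial (Fin n) ℝ,
        (∀ i, (X i).totalDegree ≤ r) → (∀ i, MvPolynomial.constantCoeff (X i) = 0) →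
        (∀ i, (Y i).totalDegree ≤ r) → (∀ i, MvPolynomial.constantCoeff (Y i) = 0) →
        coeffNorm (polyComp Y X) ≤
          coeffNorm Y * max (coeffNorm X) (coeffNorm X ^ r) * c :=
  coeffNorm_comp_le_general n r hr
end

section
/- If a multi-index d : Fin n → ℕ and an index i satisfy the subresonance condition w i ≤ Σ_j (d j)·(w j), then the total degree satisfies Σ_j d j ≤ wmin/wmax. Consequently, every monomial occurring in a subresonance polynomial self-map has total degree at most ⌊wmin/wmax⌋. -/
/-!
Every weight lies in `[wmin, wmax]` and `wmax < 0`, so a subresonant multi-index `d` for the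
index `i` satisfies `wmin ≤ w i ≤ Σ_j d_j w_j ≤ |d| · wmax`; dividing by the negative number
`wmax` gives `|d| ≤ wmin / wmax`, and `|d|` is a natural number, hence at most the floor.
-/

open MvPolynomial

/-- The minimum of the weights `w : Fin n → ℝ` (for `n ≥ 1`). -/
noncomputable def wmin {n : ℕ} (hn : 1 ≤ n) (w : Fin n → ℝ) : ℝ :=
  Finset.univ.inf' (Finset.univ_nonempty_iff.mpr ⟨⟨0, hn⟩⟩) w

/-- The maximum of the weights `w : Fin n → ℝ` (for `n ≥ 1`). -/
noncomputable def wmax {n : ℕ} (hn : 1 ≤ n) (w : Fin n → ℝ) : ℝ :=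
  Finset.univ.sup' (Finset.univ_nonempty_iff.mpr ⟨⟨0, hn⟩⟩) w

theorem Finset.sum_mul_le_sum_mul_sup' {ι : Type*} {s : Finset ι} (hs : s.Nonempty)
    (c w : ι → ℝ) (hc : ∀ j ∈ s, 0 ≤ c j) :
    ∑ j ∈ s, c j * w j ≤ (∑ j ∈ s, c j) * s.sup' hs w := by
  rw [Finset.sum_mul]
  exact Finset.sum_le_sum fun j hj => mul_le_mul_of_nonneg_left (s.le_sup' w hj) (hc j hj)

section Weights

variable {n : ℕ} (hn : 1 ≤ n) (w : Fin n → ℝ)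

theorem wmin_le (i : Fin n) : wmin hn w ≤ w i :=
  Finset.inf'_le w (Finset.mem_univ i)

theorem wmax_neg (hw : ∀ j, w j < 0) : wmax hn w < 0 :=
  (Finset.sup'_lt_iff _).mpr fun j _ => hw j

theorem sum_le_wmin_div_wmax_of_le_sum_mul (hw : ∀ j, w j < 0) (d : Fin n → ℕ) (i : Fin n)
    (hd : w i ≤ ∑ j, (d j : ℝ) * w j) :
    ∑ j, (d j : ℝ) ≤ wmin hn w / wmax hn w := by
  rw [le_div_iff_of_neg (wmax_neg hn w hw)]
  calc wmin hn w ≤ w i := wmin_le hn w i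
    _ ≤ ∑ j, (d j : ℝ) * w j := hd
    _ ≤ (∑ j, (d j : ℝ)) * wmax hn w :=
        Finset.sum_mul_le_sum_mul_sup' _ _ _ fun j _ => Nat.cast_nonneg (d j)

theorem sum_le_floor_wmin_div_wmax_of_le_sum_mul (hw : ∀ j, w j < 0) (d : Fin n → ℕ)
    (i : Fin n) (hd : w i ≤ ∑ j, (d j : ℝ) * w j) :
    ∑ j, d j ≤ ⌊wmin hn w / wmax hn w⌋₊ :=
  Nat.le_floor <| by exact_mod_cast sum_le_wmin_div_wmax_of_le_sum_mul hn w hw d i hd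

end Weights

/-- If a multi-index `d : Fin n → ℕ` and an index `i` satisfy the
subresonance condition `w i ≤ Σ_j (d j)·(w j)`, then `Σ_j d j ≤ wmin/wmax`.
Consequently, every monomial occurring in a subresonance polynomial self-map
has total degree at most `⌊wmin/wmax⌋`. -/
theorem subresonance_degree_bound (n : ℕ) (hn : 1 ≤ n) (w : Fin n → ℝ)
    (hw : ∀ j, w j < 0) :
    (∀ (d : Fin n → ℕ) (i : Fin n),
        w i ≤ ∑ j, (d j : ℝ) * w j →
        (∑ j, (d j : ℝ)) ≤ wmin hn w / wmax hn w) ∧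
    (∀ P : Fin n → MvPolynomial (Fin n) ℝ,
        (∀ i, MvPolynomial.constantCoeff (P i) = 0) →
        (∀ i, ∀ d ∈ (P i).support, w i - ∑ j, (d j : ℝ) * w j ≤ 0) →
        ∀ i, ∀ d ∈ (P i).support, (∑ j, d j) ≤ ⌊wmin hn w / wmax hn w⌋₊) :=
  ⟨sum_le_wmin_div_wmax_of_le_sum_mul hn w hw,
    fun _ _ hsub i d hd =>
      sum_le_floor_wmin_div_wmax_of_le_sum_mul hn w hw d i (sub_nonpos.mp (hsub i d hd))⟩
end

section
/- The composition of two subresonance polynomial self-maps of ℝ^n (substituting the components of one tuple for the variables in the components of the other) is again a subresonance polynomial self-map of ℝ^n. -/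
open MvPolynomial

/-- The defect of the monomial with exponent multi-index `d` occurring in the
`i`-th component: `w i − Σ_j (d j)·(w j)`. -/
noncomputable def defect {n : ℕ} (w : Fin n → ℝ) (i : Fin n) (d : Fin n →₀ ℕ) : ℝ :=
  w i - ∑ j, (d j : ℝ) * w j

/-- An `n`-tuple of polynomials with zero constant coefficients
(a polynomial self-map of `ℝ^n`). -/
def IsPolySelfMap {n : ℕ} (P : Fin n → MvPolynomial (Fin n) ℝ) : Prop :=
  ∀ i, MvPolynomial.constantCoeff (P i) = 0

/-- `P` is subresonance: every monomial occurring with nonzero coefficient in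
each component has defect `≤ 0`. -/
def SubresonanceDefects {n : ℕ} (w : Fin n → ℝ)
    (P : Fin n → MvPolynomial (Fin n) ℝ) : Prop :=
  ∀ i, ∀ d ∈ (P i).support, defect w i d ≤ 0

/-!
Write `weight w d = Σ_j d j • w j` for the `w`-weight of a monomial; subresonance of `P` says
that every monomial of `P i` has weight at least `w i`. Weight is additive, so every monomial of
`∏_j Q j ^ d j` has weight at least `Σ_j d j • w j = weight w d` once every monomial of `Q j` has
weight at least `w j`. Substituting `Q` into a monomial `d` of `P i` thus only produces monomials
of weight `≥ weight w d ≥ w i`. Zero constant terms are preserved since `P (Q 0) = P 0 = 0`.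
-/

open Finsupp

section WeightLowerBound

variable {σ τ R M : Type*} [CommSemiring R] [AddCommMonoid M] [PartialOrder M]
  [IsOrderedAddMonoid M]

theorem le_weight_of_mem_support_mul {w : σ → M} {p q : MvPolynomial σ R} {a b : M}
    (hp : ∀ e ∈ p.support, a ≤ weight w e) (hq : ∀ e ∈ q.support, b ≤ weight w e) :
    ∀ e ∈ (p * q).support, a + b ≤ weight w e := by
  classical
  intro e he
  obtain ⟨e₁, he₁, e₂, he₂, rfl⟩ := Finset.mem_add.mp (support_mul p q he)
  rw [map_add]
  exact add_le_add (hp e₁ he₁) (hq e₂ he₂)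

theorem le_weight_of_mem_support_prod {ι : Type*} {w : σ → M} {f : ι → MvPolynomial σ R}
    {a : ι → M} (hf : ∀ i, ∀ e ∈ (f i).support, a i ≤ weight w e) (s : Finset ι) :
    ∀ e ∈ (∏ i ∈ s, f i).support, ∑ i ∈ s, a i ≤ weight w e := by
  classical
  induction s using Finset.induction with
  | empty =>
    intro e he
    rw [Finset.prod_empty, ← C_1, C_apply] at he
    rw [Finset.mem_singleton.mp (support_monomial_subset he), Finset.sum_empty, map_zero]
  | insert i s hi ih =>
    rw [Finset.prod_insert hi, Finset.sum_insert hi]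
    exact le_weight_of_mem_support_mul (hf i) ih

theorem le_weight_of_mem_support_pow {w : σ → M} {p : MvPolynomial σ R} {a : M}
    (hp : ∀ e ∈ p.support, a ≤ weight w e) (k : ℕ) :
    ∀ e ∈ (p ^ k).support, k • a ≤ weight w e := by
  have := le_weight_of_mem_support_prod (fun _ ↦ hp) (Finset.range k)
  rwa [← Finset.pow_eq_prod_const, Finset.sum_const, Finset.card_range] at this

theorem exists_mem_support_weight_le_of_mem_support_bind₁ {v : σ → M} {w : τ → M}
    {Q : σ → MvPolynomial τ R} (hQ : ∀ j, ∀ e ∈ (Q j).support, v j ≤ weight w e)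
    {p : MvPolynomial σ R} {e : τ →₀ ℕ} (he : e ∈ (bind₁ Q p).support) :
    ∃ d ∈ p.support, weight v d ≤ weight w e := by
  classical
  rw [MvPolynomial.mem_support_iff, bind₁, aeval_def, eval₂_eq, coeff_sum] at he
  obtain ⟨d, hd, hcoeff⟩ := Finset.exists_ne_zero_of_sum_ne_zero he
  refine ⟨d, hd, ?_⟩
  rw [algebraMap_eq, coeff_C_mul] at hcoeff
  rw [weight_apply, Finsupp.sum]
  exact le_weight_of_mem_support_prod (fun j ↦ le_weight_of_mem_support_pow (hQ j) (d j))
    d.support e (MvPolynomial.mem_support_iff.mpr (right_ne_zero_of_mul hcoeff))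

end WeightLowerBound

theorem constantCoeff_bind₁_of_constantCoeff_eq_zero {σ τ R : Type*} [CommSemiring R]
    {Q : σ → MvPolynomial τ R} (hQ : ∀ j, constantCoeff (Q j) = 0) (p : MvPolynomial σ R) :
    constantCoeff (bind₁ Q p) = constantCoeff p := by
  rw [← eval_zero, ← eval_zero, eval, eval₂Hom_bind₁, eval]
  congr 2
  funext j
  exact (eval₂Hom_zero_apply _ _).trans (hQ j)

theorem defect_eq_sub_weight {n : ℕ} (w : Fin n → ℝ) (i : Fin n) (d : Fin n →₀ ℕ) :
    defect w i d = w i - weight w d := by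
  simp [defect, weight_apply, Finsupp.sum_fintype, nsmul_eq_mul]

theorem subresonanceDefects_iff {n : ℕ} {w : Fin n → ℝ} {P : Fin n → MvPolynomial (Fin n) ℝ} :
    SubresonanceDefects w P ↔ ∀ i, ∀ d ∈ (P i).support, w i ≤ weight w d := by
  simp only [SubresonanceDefects, defect_eq_sub_weight, sub_nonpos]

theorem subresonance_comp_general (n : ℕ) (w : Fin n → ℝ)
    (P Q : Fin n → MvPolynomial (Fin n) ℝ)
    (hP0 : IsPolySelfMap P) (hP : SubresonanceDefects w P)
    (hQ0 : IsPolySelfMap Q) (hQ : SubresonanceDefects w Q) :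
    IsPolySelfMap (polyComp P Q) ∧ SubresonanceDefects w (polyComp P Q) := by
  refine ⟨fun i ↦ ?_, subresonanceDefects_iff.mpr fun i e he ↦ ?_⟩
  · rw [polyComp, constantCoeff_bind₁_of_constantCoeff_eq_zero hQ0, hP0 i]
  · obtain ⟨d, hd, hde⟩ :=
      exists_mem_support_weight_le_of_mem_support_bind₁ (subresonanceDefects_iff.mp hQ) he
    exact (subresonanceDefects_iff.mp hP i d hd).trans hde

/-- The composition of two subresonance polynomial self-maps of `ℝ^n`
is again a subresonance polynomial self-map of `ℝ^n`. -/
theorem subresonance_comp (n : ℕ) (hn : 1 ≤ n) (w : Fin n → ℝ) (hw : ∀ j, w j < 0)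
    (P Q : Fin n → MvPolynomial (Fin n) ℝ)
    (hP0 : IsPolySelfMap P) (hP : SubresonanceDefects w P)
    (hQ0 : IsPolySelfMap Q) (hQ : SubresonanceDefects w Q) :
    IsPolySelfMap (polyComp P Q) ∧ SubresonanceDefects w (polyComp P Q) :=
  subresonance_comp_general n w P Q hP0 hP hQ0 hQ
end

section
/- The composition of two resonance polynomial self-maps of ℝ^n (substituting the components of one tuple for the variables in the components of the other) is again a resonance polynomial self-map of ℝ^n. -/
/-!
Resonance of `P` says exactly that each `P i` is weighted homogeneous of degree `w i` for the
weights `w`. Substituting, for each variable `j`, a polynomial that is weighted homogeneous of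
degree `w j` maps a monomial of weighted degree `m` to a weighted homogeneous polynomial of
degree `m`, so composition preserves resonance; and composing maps fixing `0` fixes `0`.
-/

open MvPolynomial

/-- `P` is resonance: every monomial occurring with nonzero coefficient in
each component has defect `= 0`. -/
def ResonanceDefects {n : ℕ} (w : Fin n → ℝ)
    (P : Fin n → MvPolynomial (Fin n) ℝ) : Prop :=
  ∀ i, ∀ d ∈ (P i).support, defect w i d = 0

namespace MvPolynomial

variable {σ τ R M : Type*} [CommSemiring R]

theorem constantCoeff_bind₁ (Q : σ → MvPolynomial τ R) (p : MvPolynomial σ R) :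
    constantCoeff (bind₁ Q p) = eval (fun j => constantCoeff (Q j)) p := by
  rw [← eval_zero]
  exact eval₂Hom_bind₁ (RingHom.id R) 0 Q p

theorem constantCoeff_bind₁_eq_zero {Q : σ → MvPolynomial τ R} {p : MvPolynomial σ R}
    (hp : constantCoeff p = 0) (hQ : ∀ j, constantCoeff (Q j) = 0) :
    constantCoeff (bind₁ Q p) = 0 := by
  simp only [constantCoeff_bind₁, hQ, eval_zero', hp]

variable [AddCommMonoid M]

theorem IsWeightedHomogeneous.bind₁ {w : σ → M} {w' : τ → M} {m : M}
    {Q : σ → MvPolynomial τ R} (hQ : ∀ j, (Q j).IsWeightedHomogeneous w' (w j))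
    {p : MvPolynomial σ R} (hp : p.IsWeightedHomogeneous w m) :
    (bind₁ Q p).IsWeightedHomogeneous w' m := by
  induction hp using IsWeightedHomogeneous.induction_on with
  | zero => simpa using isWeightedHomogeneous_zero R w' m
  | add p q _ _ hp hq => simpa using hp.add hq
  | monomial d r hd =>
    rw [bind₁_monomial, ← hd, Finsupp.weight_apply, Finsupp.sum, ← zero_add (∑ _ ∈ _, _)]
    exact (isWeightedHomogeneous_C w' r).mul
      (IsWeightedHomogeneous.prod _ _ _ fun j _ => (hQ j).pow (d j))

end MvPolynomial

theorem resonanceDefects_iff {n : ℕ} (w : Fin n → ℝ) (P : Fin n → MvPolynomial (Fin n) ℝ) :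
    ResonanceDefects w P ↔ ∀ i, (P i).IsWeightedHomogeneous w (w i) := by
  have weight_eq (d : Fin n →₀ ℕ) : Finsupp.weight w d = ∑ j, (d j : ℝ) * w j := by
    simp only [Finsupp.weight_eq_sum, nsmul_eq_mul]
  simp only [ResonanceDefects, IsWeightedHomogeneous, defect, mem_support_iff, weight_eq,
    sub_eq_zero]
  exact forall_congr' fun _ => forall_congr' fun _ => imp_congr_right fun _ => eq_comm

theorem resonance_comp_general (n : ℕ) (w : Fin n → ℝ)
    (P Q : Fin n → MvPolynomial (Fin n) ℝ)
    (hP0 : IsPolySelfMap P) (hP : ResonanceDefects w P)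
    (hQ0 : IsPolySelfMap Q) (hQ : ResonanceDefects w Q) :
    IsPolySelfMap (polyComp P Q) ∧ ResonanceDefects w (polyComp P Q) := by
  rw [resonanceDefects_iff] at hP hQ ⊢
  exact ⟨fun i => constantCoeff_bind₁_eq_zero (hP0 i) hQ0, fun i => (hP i).bind₁ hQ⟩

/-- The composition of two resonance polynomial self-maps of `ℝ^n`
is again a resonance polynomial self-map of `ℝ^n`. -/
theorem resonance_comp (n : ℕ) (hn : 1 ≤ n) (w : Fin n → ℝ) (hw : ∀ j, w j < 0)
    (P Q : Fin n → MvPolynomial (Fin n) ℝ)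
    (hP0 : IsPolySelfMap P) (hP : ResonanceDefects w P)
    (hQ0 : IsPolySelfMap Q) (hQ : ResonanceDefects w Q) :
    IsPolySelfMap (polyComp P Q) ∧ ResonanceDefects w (polyComp P Q) :=
  resonance_comp_general n w P Q hP0 hP hQ0 hQ
end

section
/- If h is a subresonance polynomial self-map of ℝ^n and u ∈ ℝ^n, then the translated map x ↦ h(x + u) − h(u) is again (induced by) a subresonance polynomial self-map of ℝ^n. -/
open MvPolynomial

/-- The map `ℝ^n → ℝ^n` induced by an `n`-tuple of polynomials. -/
noncomputable def evalMap {n : ℕ} (P : Fin n → MvPolynomial (Fin n) ℝ)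
    (x : Fin n → ℝ) : Fin n → ℝ :=
  fun i => MvPolynomial.eval x (P i)

/-! Substituting `x + u` for `x` turns a monomial `x^d` into `∏ j, (x j + u j) ^ d j`, all of whose
monomials have exponents `≤ d` componentwise. As the weights are negative, lowering exponents can
only lower the defect. -/

namespace MvPolynomial

variable {σ R : Type*} [CommSemiring R]

theorem degreeOf_X_add_C_le [DecidableEq σ] (i j : σ) (a : R) :
    degreeOf i (X j + C a : MvPolynomial σ R) ≤ if i = j then 1 else 0 := by
  refine (degreeOf_add_le i _ _).trans ?_
  rw [degreeOf_C, max_eq_left (Nat.zero_le _), degreeOf_le_iff]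
  intro e he
  rw [Finset.mem_singleton.mp (support_monomial_subset he)]
  simp [Finsupp.single_apply, eq_comm]

theorem le_of_mem_support_prod_X_add_C_pow (u : σ → R) (d : σ →₀ ℕ) {e : σ →₀ ℕ}
    (he : e ∈ (d.prod fun j k => (X j + C (u j)) ^ k).support) : e ≤ d := by
  classical
  intro i
  calc e i ≤ degreeOf i (d.prod fun j k => (X j + C (u j)) ^ k) :=
        monomial_le_degreeOf i he
    _ ≤ ∑ j ∈ d.support, d j * degreeOf i (X j + C (u j)) :=
        (degreeOf_prod_le i _ _).trans (Finset.sum_le_sum fun j _ => degreeOf_pow_le i _ _)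
    _ ≤ ∑ j ∈ d.support, d j * if i = j then 1 else 0 :=
        Finset.sum_le_sum fun j _ => Nat.mul_le_mul_left _ (degreeOf_X_add_C_le i j _)
    _ = d i := by simp [Finsupp.mem_support_iff, eq_comm]

theorem exists_mem_support_le_of_mem_support_aeval_X_add_C (p : MvPolynomial σ R) (u : σ → R)
    {e : σ →₀ ℕ} (he : e ∈ (aeval (fun j => X j + C (u j)) p).support) :
    ∃ d ∈ p.support, e ≤ d := by
  classical
  rw [p.as_sum, map_sum] at he
  obtain ⟨d, hd, hed⟩ := Finset.mem_biUnion.mp (support_sum he)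
  refine ⟨d, hd, le_of_mem_support_prod_X_add_C_pow u d ?_⟩
  rw [aeval_monomial, algebraMap_eq, ← smul_eq_C_mul] at hed
  exact support_smul hed

theorem eval_aeval_X_add_C (p : MvPolynomial σ R) (u x : σ → R) :
    eval x (aeval (fun j => X j + C (u j)) p) = eval (x + u) p := by
  rw [← aeval_eq_eval, ← AlgHom.comp_apply, comp_aeval]
  simp [Pi.add_def]

theorem support_sub_C_constantCoeff_subset {R : Type*} [CommRing R] (p : MvPolynomial σ R) :
    (p - C (constantCoeff p)).support ⊆ p.support := by
  classical
  intro d hd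
  rw [mem_support_iff, coeff_sub, coeff_C] at hd
  by_cases h0 : d = 0
  · simp [h0, constantCoeff_eq] at hd
  · rwa [if_neg (Ne.symm h0), sub_zero, ← mem_support_iff] at hd

end MvPolynomial

theorem defect_le_defect_of_le {n : ℕ} {w : Fin n → ℝ} (hw : ∀ j, w j ≤ 0) (i : Fin n)
    {d e : Fin n →₀ ℕ} (hde : d ≤ e) : defect w i d ≤ defect w i e := by
  refine sub_le_sub_left (Finset.sum_le_sum fun j _ => ?_) _
  exact mul_le_mul_of_nonpos_right (by exact_mod_cast hde j) (hw j)

theorem subresonance_translate_general (n : ℕ) (w : Fin n → ℝ)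
    (hw : ∀ j, w j < 0) (h : Fin n → MvPolynomial (Fin n) ℝ)
    (hh : SubresonanceDefects w h) (u : Fin n → ℝ) :
    ∃ Q : Fin n → MvPolynomial (Fin n) ℝ,
      IsPolySelfMap Q ∧ SubresonanceDefects w Q ∧
      ∀ x : Fin n → ℝ, evalMap Q x = evalMap h (x + u) - evalMap h u := by
  set T : MvPolynomial (Fin n) ℝ →ₐ[ℝ] MvPolynomial (Fin n) ℝ := aeval fun j => X j + C (u j)
  refine ⟨fun i => T (h i) - C (constantCoeff (T (h i))), fun i => by simp, ?_, ?_⟩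
  · intro i e he
    obtain ⟨d, hd, hed⟩ := exists_mem_support_le_of_mem_support_aeval_X_add_C (h i) u
      (support_sub_C_constantCoeff_subset _ he)
    exact (defect_le_defect_of_le (fun j => (hw j).le) i hed).trans (hh i d hd)
  · intro x
    ext i
    simp only [evalMap, Pi.sub_apply, map_sub, eval_C, ← eval_zero, T,
      eval_aeval_X_add_C, zero_add]

/-- If `h` is a subresonance polynomial self-map of `ℝ^n` and `u ∈ ℝ^n`,
then the translated map `x ↦ h(x + u) − h(u)` is again (induced by) a subresonance
polynomial self-map of `ℝ^n`. -/
theorem subresonance_translate (n : ℕ) (hn : 1 ≤ n) (w : Fin n → ℝ)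
    (hw : ∀ j, w j < 0) (h : Fin n → MvPolynomial (Fin n) ℝ)
    (hh0 : IsPolySelfMap h) (hh : SubresonanceDefects w h) (u : Fin n → ℝ) :
    ∃ Q : Fin n → MvPolynomial (Fin n) ℝ,
      IsPolySelfMap Q ∧ SubresonanceDefects w Q ∧
      ∀ x : Fin n → ℝ, evalMap Q x = evalMap h (x + u) - evalMap h u :=
  subresonance_translate_general n w hw h hh u
end

section
/- Let X and Y be n-tuples of real polynomials in n variables with zero constant coefficients, and let a, b ∈ ℝ. If every monomial occurring in every component of X has defect ≤ a and every monomial occurring in every component of Y has defect ≤ b, then every monomial occurring in every component of the Lie bracket [X, Y] has defect ≤ a + b. -/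
open MvPolynomial

/-- The Lie bracket of two `n`-tuples of polynomials (viewed as polynomial
vector fields): the `i`-th component of `[X, Y]` is
`Σ_j (X j · ∂_j(Y i) − Y j · ∂_j(X i))`. -/
noncomputable def polyBracket {n : ℕ} (X Y : Fin n → MvPolynomial (Fin n) ℝ) :
    Fin n → MvPolynomial (Fin n) ℝ :=
  fun i => ∑ j, (X j * MvPolynomial.pderiv j (Y i) - Y j * MvPolynomial.pderiv j (X i))

/-!
A monomial `x^v` of `∂_j q` comes from the monomial `x^(v + e_j)` of `q`, and multiplying it by
a monomial `x^u` of the `j`-th component of the other field gives `x^(u + v)`. Since the defect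
is affine in the exponent, `defect i (u + v) = defect j u + defect i (v + e_j)`: the `w j`
gained by differentiating is exactly the `w j` of the `j`-th component.
-/

theorem MvPolynomial.mem_support_of_mem_support_pderiv {R σ : Type*} [CommSemiring R]
    {i : σ} {p : MvPolynomial σ R} {m : σ →₀ ℕ} (hm : m ∈ (pderiv i p).support) :
    m + Finsupp.single i 1 ∈ p.support := by
  rw [mem_support_iff, coeff_pderiv] at hm
  exact mem_support_iff.mpr (left_ne_zero_of_mul hm)

theorem defect_add {n : ℕ} (w : Fin n → ℝ) (i j : Fin n) (u v : Fin n →₀ ℕ) :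
    defect w i (u + v) = defect w j u + defect w i (v + Finsupp.single j 1) := by
  simp only [defect, Finsupp.add_apply, Nat.cast_add, add_mul, Finset.sum_add_distrib,
    Finsupp.single_apply, Nat.cast_ite, Nat.cast_one, Nat.cast_zero, ite_mul, one_mul, zero_mul,
    Finset.sum_ite_eq, Finset.mem_univ, if_true]
  ring

theorem defect_le_of_mem_support_mul_pderiv {n : ℕ} {w : Fin n → ℝ} {i j : Fin n}
    {p q : MvPolynomial (Fin n) ℝ} {a b : ℝ} (hp : ∀ d ∈ p.support, defect w j d ≤ a)
    (hq : ∀ d ∈ q.support, defect w i d ≤ b) {d : Fin n →₀ ℕ}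
    (hd : d ∈ (p * pderiv j q).support) : defect w i d ≤ a + b := by
  classical
  obtain ⟨u, hu, v, hv, rfl⟩ := Finset.mem_add.mp (support_mul _ _ hd)
  rw [defect_add w i j u v]
  exact add_le_add (hp u hu) (hq _ (mem_support_of_mem_support_pderiv hv))

theorem polyBracket_defect_le_general (n : ℕ) (w : Fin n → ℝ)
    (X Y : Fin n → MvPolynomial (Fin n) ℝ)
    (a b : ℝ)
    (hX : ∀ i, ∀ d ∈ (X i).support, defect w i d ≤ a)
    (hY : ∀ i, ∀ d ∈ (Y i).support, defect w i d ≤ b) :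
    ∀ i, ∀ d ∈ ((polyBracket X Y) i).support, defect w i d ≤ a + b := by
  classical
  intro i d hd
  obtain ⟨j, -, hj⟩ := Finset.mem_biUnion.mp (support_sum hd)
  rcases Finset.mem_union.mp (support_sub _ _ _ hj) with hXY | hYX
  · exact defect_le_of_mem_support_mul_pderiv (hX j) (hY i) hXY
  · exact add_comm b a ▸ defect_le_of_mem_support_mul_pderiv (hY j) (hX i) hYX

/-- If every monomial occurring in every component of `X` has defect `≤ a`
and every monomial occurring in every component of `Y` has defect `≤ b`, then every
monomial occurring in every component of the Lie bracket `[X, Y]` has defect `≤ a + b`. -/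
theorem polyBracket_defect_le (n : ℕ) (hn : 1 ≤ n) (w : Fin n → ℝ)
    (hw : ∀ j, w j < 0) (X Y : Fin n → MvPolynomial (Fin n) ℝ)
    (hX0 : ∀ i, MvPolynomial.constantCoeff (X i) = 0)
    (hY0 : ∀ i, MvPolynomial.constantCoeff (Y i) = 0)
    (a b : ℝ)
    (hX : ∀ i, ∀ d ∈ (X i).support, defect w i d ≤ a)
    (hY : ∀ i, ∀ d ∈ (Y i).support, defect w i d ≤ b) :
    ∀ i, ∀ d ∈ ((polyBracket X Y) i).support, defect w i d ≤ a + b :=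
  polyBracket_defect_le_general n w X Y a b hX hY
end

section
/- A polynomial self-map X of ℝ^n satisfies Λ ∘ X = X ∘ Λ (as maps ℝ^n → ℝ^n) if and only if X is resonance, i.e., every monomial occurring with nonzero coefficient in every component of X has defect equal to 0. -/
/-!
Substituting `Λ x` into a polynomial multiplies the monomial `x ^ d` by `exp (Σ_j d j * w j)`.
Since ℝ is infinite, `exp (w i) * P i = P i ∘ Λ` as functions exactly when it holds as polynomials,
i.e. when `exp (w i) = exp (Σ_j d j * w j)` for every monomial `d` of `P i`. By injectivity of
`exp` this says that `P i` is weighted homogeneous of weight `w i`, which is resonance.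
-/

open MvPolynomial

open Finsupp (weight)
open Real

/-- The polynomial `p ∘ Λ`, where `Λ` scales the variable `j` by `exp (w j)`. -/
noncomputable def scaleByExpWeight {σ : Type*} (w : σ → ℝ) (p : MvPolynomial σ ℝ) :
    MvPolynomial σ ℝ :=
  ∑ d ∈ p.support, monomial d (exp (weight w d) * coeff d p)

section scaleByExpWeight

variable {σ : Type*} (w : σ → ℝ) (p : MvPolynomial σ ℝ)

lemma coeff_scaleByExpWeight (d : σ →₀ ℕ) :
    coeff d (scaleByExpWeight w p) = exp (weight w d) * coeff d p := by
  classical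
  simp only [scaleByExpWeight, coeff_sum, coeff_monomial, Finset.sum_ite_eq']
  split_ifs with hd
  · rfl
  · rw [notMem_support_iff.mp hd, mul_zero]

lemma eval_scaleByExpWeight (x : σ → ℝ) :
    eval x (scaleByExpWeight w p) = eval (fun j => exp (w j) * x j) p := by
  rw [scaleByExpWeight, map_sum, eval_eq]
  refine Finset.sum_congr rfl fun d _ => ?_
  simp only [eval_monomial, Finsupp.prod, mul_pow, Finset.prod_mul_distrib, ← exp_nat_mul,
    ← exp_sum, Finsupp.weight_apply, Finsupp.sum, nsmul_eq_mul]
  ring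

theorem exp_mul_eval_eq_eval_exp_mul_iff (m : ℝ) :
    (∀ x : σ → ℝ, exp m * eval x p = eval (fun j => exp (w j) * x j) p) ↔
      IsWeightedHomogeneous w p m := by
  have hpoly : (∀ x : σ → ℝ, exp m * eval x p = eval (fun j => exp (w j) * x j) p) ↔
      C (exp m) * p = scaleByExpWeight w p := by
    simp only [MvPolynomial.funext_iff, eval_scaleByExpWeight, map_mul, eval_C]
  rw [hpoly, MvPolynomial.ext_iff]
  simp only [coeff_C_mul, coeff_scaleByExpWeight]
  refine forall_congr' fun d => ⟨fun h hd => ?_, fun h => ?_⟩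
  · exact (exp_injective (mul_right_cancel₀ hd h)).symm
  · by_cases hd : coeff d p = 0
    · simp [hd]
    · rw [h hd]

end scaleByExpWeight

lemma defect_eq_zero_iff {n : ℕ} (w : Fin n → ℝ) (i : Fin n) (d : Fin n →₀ ℕ) :
    defect w i d = 0 ↔ weight w d = w i := by
  rw [defect, Finsupp.weight_eq_sum, sub_eq_zero, eq_comm]
  simp only [nsmul_eq_mul]

lemma isWeightedHomogeneous_iff_forall_defect_eq_zero {n : ℕ} (w : Fin n → ℝ) (i : Fin n)
    (p : MvPolynomial (Fin n) ℝ) :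
    IsWeightedHomogeneous w p (w i) ↔ ∀ d ∈ p.support, defect w i d = 0 := by
  simp only [IsWeightedHomogeneous, mem_support_iff, defect_eq_zero_iff]

theorem commutes_with_Lambda_iff_resonance_general (n : ℕ) (w : Fin n → ℝ)
    (P : Fin n → MvPolynomial (Fin n) ℝ) :
    (∀ (x : Fin n → ℝ) (i : Fin n),
        Real.exp (w i) * MvPolynomial.eval x (P i)
          = MvPolynomial.eval (fun j => Real.exp (w j) * x j) (P i))
      ↔ (∀ i, ∀ d ∈ (P i).support, defect w i d = 0) := by
  rw [forall_comm]
  refine forall_congr' fun i => ?_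
  rw [exp_mul_eval_eq_eval_exp_mul_iff, isWeightedHomogeneous_iff_forall_defect_eq_zero]

/-- A polynomial self-map `P` of `ℝ^n` satisfies `Λ ∘ P = P ∘ Λ`
(as maps `ℝ^n → ℝ^n`, where `Λ` is the diagonal map with entries `exp (w j)`)
if and only if `P` is resonance, i.e. every monomial occurring with nonzero
coefficient in every component of `P` has defect equal to `0`. -/
theorem commutes_with_Lambda_iff_resonance (n : ℕ) (hn : 1 ≤ n) (w : Fin n → ℝ)
    (hw : ∀ j, w j < 0) (P : Fin n → MvPolynomial (Fin n) ℝ)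
    (hP0 : ∀ i, MvPolynomial.constantCoeff (P i) = 0) :
    (∀ (x : Fin n → ℝ) (i : Fin n),
        Real.exp (w i) * MvPolynomial.eval x (P i)
          = MvPolynomial.eval (fun j => Real.exp (w j) * x j) (P i))
      ↔ (∀ i, ∀ d ∈ (P i).support, defect w i d = 0) :=
  commutes_with_Lambda_iff_resonance_general n w P
end

section
/- Let (M, μ) be a probability space, T : M → M a measure-preserving map, A : M → GL(d, ℝ) a measurable map, and let A(k, x) = A(T^{k−1} x) ∘ ⋯ ∘ A(T x) ∘ A(x) be the associated linear cocycle. Assume that for μ-almost every x and every nonzero v ∈ ℝ^d, ‖A(k, x) v‖ → ∞ as k → ∞. If τ : M → ℝ^d is a measurable map satisfying τ(T x) = A(x) τ(x) for μ-almost every x, then τ = 0 μ-almost everywhere. -/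
/-!
Iterating the equivariance relation gives `τ (T^[k] x) = A(k, x) (τ x)` for almost every `x`, so
wherever `τ x ≠ 0` the norms `‖τ (T^[k] x)‖` tend to infinity. A map preserving a finite measure
is conservative, and by Poincaré recurrence almost every point of `{‖τ‖ ≤ n}` returns to that set
infinitely often; hence along almost no orbit does `‖τ‖` tend to infinity.
-/

open MeasureTheory Filter

/-- The linear cocycle over `T` generated by `A`:
`cocycle T A k x = A(T^{k−1} x) ∘ ⋯ ∘ A(T x) ∘ A(x)`. -/
noncomputable def cocycle {M E : Type*} [NormedAddCommGroup E] [NormedSpace ℝ E]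
    (T : M → M) (A : M → E ≃L[ℝ] E) : ℕ → M → (E ≃L[ℝ] E)
  | 0, _ => ContinuousLinearEquiv.refl ℝ E
  | (k + 1), x => (A x).trans (cocycle T A k (T x))

section Cocycle

variable {M E : Type*} [NormedAddCommGroup E] [NormedSpace ℝ E] (T : M → M) (A : M → E ≃L[ℝ] E)

lemma cocycle_succ_apply (k : ℕ) (x : M) (v : E) :
    cocycle T A (k + 1) x v = A (T^[k] x) (cocycle T A k x v) := by
  induction k generalizing x v with
  | zero => rfl
  | succ k ih =>
    show cocycle T A (k + 1) (T x) (A x v) = _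
    rw [ih (T x) (A x v), Function.iterate_succ_apply]
    rfl

lemma apply_iterate_eq_cocycle {τ : M → E} {x : M}
    (hτ : ∀ k, τ (T (T^[k] x)) = A (T^[k] x) (τ (T^[k] x))) (k : ℕ) :
    τ (T^[k] x) = cocycle T A k x (τ x) := by
  induction k with
  | zero => rfl
  | succ k ih => rw [Function.iterate_succ_apply', hτ k, ih, cocycle_succ_apply]

lemma ae_apply_iterate_eq_cocycle [MeasurableSpace M] {μ : Measure M}
    (hT : Measure.QuasiMeasurePreserving T μ μ) {τ : M → E} (hτ : ∀ᵐ x ∂μ, τ (T x) = A x (τ x)) :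
    ∀ᵐ x ∂μ, ∀ k, τ (T^[k] x) = cocycle T A k x (τ x) := by
  have hτ_iter : ∀ᵐ x ∂μ, ∀ k, τ (T (T^[k] x)) = A (T^[k] x) (τ (T^[k] x)) :=
    ae_all_iff.2 fun k => (hT.iterate k).ae hτ
  filter_upwards [hτ_iter] with x hx
  exact apply_iterate_eq_cocycle T A hx

end Cocycle

lemma MeasureTheory.Conservative.ae_not_tendsto_atTop {α : Type*} [MeasurableSpace α]
    {μ : Measure α} {T : α → α} (hT : Conservative T μ) {g : α → ℝ} (hg : Measurable g) :
    ∀ᵐ x ∂μ, ¬Tendsto (fun k => g (T^[k] x)) atTop atTop := by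
  have hrec : ∀ᵐ x ∂μ, ∀ n : ℕ, g x ≤ n → ∃ᶠ k in atTop, g (T^[k] x) ≤ n := ae_all_iff.2 fun n =>
    hT.ae_mem_imp_frequently_image_mem (measurableSet_le hg measurable_const).nullMeasurableSet
  filter_upwards [hrec] with x hx htends
  obtain ⟨n, hn⟩ := exists_nat_ge (g x)
  exact hx n hn ((htends.eventually_gt_atTop (n : ℝ)).mono fun _ => not_le.2)

theorem invariant_section_eq_zero_general {M : Type*} [MeasurableSpace M]
    (μ : Measure M) [IsProbabilityMeasure μ] (d : ℕ) (T : M → M)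
    (hT : MeasurePreserving T μ μ)
    (A : M → (EuclideanSpace ℝ (Fin d)) ≃L[ℝ] (EuclideanSpace ℝ (Fin d)))
    (hgrow : ∀ᵐ x ∂μ, ∀ v : EuclideanSpace ℝ (Fin d), v ≠ 0 →
      Tendsto (fun k : ℕ => ‖cocycle T A k x v‖) atTop atTop)
    (τ : M → EuclideanSpace ℝ (Fin d)) (hτm : Measurable τ)
    (hτ : ∀ᵐ x ∂μ, τ (T x) = A x (τ x)) :
    τ =ᵐ[μ] 0 := by
  filter_upwards [hgrow, ae_apply_iterate_eq_cocycle T A hT.quasiMeasurePreserving hτ,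
    hT.conservative.ae_not_tendsto_atTop hτm.norm] with x hgrow_x hτ_iter hrec
  by_contra hx
  exact hrec (by simpa only [hτ_iter] using hgrow_x (τ x) hx)

/-- Let `(M, μ)` be a probability space, `T` a measure-preserving map,
`A : M → GL(d, ℝ)` measurable, with associated linear cocycle `A(k, x)`.  If for
`μ`-a.e. `x` and every nonzero `v`, `‖A(k, x) v‖ → ∞`, and `τ : M → ℝ^d` is measurable
with `τ(T x) = A(x) τ(x)` a.e., then `τ = 0` almost everywhere. -/
theorem invariant_section_eq_zero {M : Type*} [MeasurableSpace M]
    (μ : Measure M) [IsProbabilityMeasure μ] (d : ℕ) (T : M → M)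
    (hT : MeasurePreserving T μ μ)
    (A : M → (EuclideanSpace ℝ (Fin d)) ≃L[ℝ] (EuclideanSpace ℝ (Fin d)))
    (hA : ∀ v : EuclideanSpace ℝ (Fin d), Measurable fun x => A x v)
    (hgrow : ∀ᵐ x ∂μ, ∀ v : EuclideanSpace ℝ (Fin d), v ≠ 0 →
      Tendsto (fun k : ℕ => ‖cocycle T A k x v‖) atTop atTop)
    (τ : M → EuclideanSpace ℝ (Fin d)) (hτm : Measurable τ)
    (hτ : ∀ᵐ x ∂μ, τ (T x) = A x (τ x)) :
    τ =ᵐ[μ] 0 :=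
  invariant_section_eq_zero_general μ d T hT A hgrow τ hτm hτ
end

section
/- Let f : ℝ → ℝ, λ ∈ ℝ, and b : ℕ → ℝ. Assume that limsup_{k → ∞, k ∈ ℕ} f(k)/k ≤ λ, that b(k)/k → 0 as k → ∞, and that f(k + ε) ≤ f(k) + b(k) for every k ∈ ℕ and every ε ∈ [0, 1]. Then limsup_{t → ∞, t ∈ ℝ} f(t)/t ≤ λ. -/
/-! Writing `k = ⌊t⌋₊`, the hypothesis gives `f t / t ≤ (f k / k + b k / k) * (k / t)`, and
`b k / k → 0`, `k / t → 1`; so every eventual upper bound `a` of `f k / k` yields the eventual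
upper bound `a + ε` of `f t / t`. Conversely, upper bounds at real times restrict to integer
times. The two sets of eventual upper bounds therefore have the same infimum, even in the
degenerate cases where `limsup` takes its junk value `0`. -/

open Filter Topology

theorem Real.sInf_eq_sInf_of_subset_of_forall_add_mem {S T : Set ℝ} (hTS : T ⊆ S)
    (hST : ∀ a ∈ S, ∀ ε > 0, a + ε ∈ T) : sInf T = sInf S := by
  by_cases hS : BddBelow S
  · rcases S.eq_empty_or_nonempty with rfl | ⟨a, ha⟩
    · rw [Set.subset_empty_iff.mp hTS]
    have hT : BddBelow T := hS.mono hTS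
    refine le_antisymm (le_of_forall_pos_le_add fun ε hε => ?_)
      (csInf_le_csInf hS ⟨a + 1, hST a ha 1 one_pos⟩ hTS)
    rw [← sub_le_iff_le_add]
    exact le_csInf ⟨a, ha⟩ fun a' ha' => sub_le_iff_le_add.mpr (csInf_le hT (hST a' ha' ε hε))
  · have hT : ¬BddBelow T := fun ⟨m, hm⟩ =>
      hS ⟨m - 1, fun a ha => sub_le_iff_le_add.mpr (hm (hST a ha 1 one_pos))⟩
    rw [Real.sInf_of_not_bddBelow hS, Real.sInf_of_not_bddBelow hT]

section

variable {f : ℝ → ℝ} {b : ℕ → ℝ}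

theorem eventually_div_le_add_of_eventually_natCast_div_le
    (hb : Tendsto (fun k : ℕ => b k / k) atTop (𝓝 0))
    (hf : ∀ᶠ t in atTop, f t ≤ f ⌊t⌋₊ + b ⌊t⌋₊) {a : ℝ}
    (ha : ∀ᶠ k : ℕ in atTop, f k / k ≤ a) {ε : ℝ} (hε : 0 < ε) :
    ∀ᶠ t : ℝ in atTop, f t / t ≤ a + ε := by
  have hnat : ∀ᶠ k : ℕ in atTop, f k / k + b k / k ≤ a + ε / 2 := by
    filter_upwards [ha, hb.eventually (ge_mem_nhds (half_pos hε))] with k hak hbk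
    linarith
  have hratio : Tendsto (fun t : ℝ => (a + ε / 2) * (⌊t⌋₊ / t)) atTop (𝓝 (a + ε / 2)) := by
    simpa using tendsto_nat_floor_div_atTop.const_mul (a + ε / 2)
  filter_upwards [hf, tendsto_nat_floor_atTop.eventually hnat,
    hratio.eventually (ge_mem_nhds (by linarith : a + ε / 2 < a + ε)),
    eventually_ge_atTop 1] with t hft hfloor hlim ht
  have ht0 : 0 < t := by linarith
  have hk0 : (0 : ℝ) < ⌊t⌋₊ := by exact_mod_cast Nat.floor_pos.mpr ht
  calc f t / t ≤ (f ⌊t⌋₊ + b ⌊t⌋₊) / t := by gcongr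
    _ = (f ⌊t⌋₊ / ⌊t⌋₊ + b ⌊t⌋₊ / ⌊t⌋₊) * (⌊t⌋₊ / t) := by field_simp
    _ ≤ (a + ε / 2) * (⌊t⌋₊ / t) := by gcongr
    _ ≤ a + ε := hlim

theorem limsup_div_eq_limsup_natCast_div (hb : Tendsto (fun k : ℕ => b k / k) atTop (𝓝 0))
    (hf : ∀ᶠ t in atTop, f t ≤ f ⌊t⌋₊ + b ⌊t⌋₊) :
    limsup (fun t : ℝ => f t / t) atTop = limsup (fun k : ℕ => f k / k) atTop := by
  simp only [limsup_eq]
  exact Real.sInf_eq_sInf_of_subset_of_forall_add_mem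
    (fun a ha => tendsto_natCast_atTop_atTop.eventually ha)
    (fun a ha ε hε => eventually_div_le_add_of_eventually_natCast_div_le hb hf ha hε)

end

/-- If `limsup_{k ∈ ℕ} f(k)/k ≤ l`, `b(k)/k → 0`, and
`f(k + ε) ≤ f(k) + b(k)` for every `k ∈ ℕ` and `ε ∈ [0, 1]`, then
`limsup_{t ∈ ℝ} f(t)/t ≤ l`. -/
theorem limsup_real_of_limsup_nat (f : ℝ → ℝ) (l : ℝ) (b : ℕ → ℝ)
    (h1 : limsup (fun k : ℕ => f k / k) atTop ≤ l)
    (h2 : Tendsto (fun k : ℕ => b k / k) atTop (nhds 0))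
    (h3 : ∀ (k : ℕ) (ε : ℝ), ε ∈ Set.Icc (0 : ℝ) 1 → f (k + ε) ≤ f k + b k) :
    limsup (fun t : ℝ => f t / t) atTop ≤ l := by
  have hfloor : ∀ᶠ t in atTop, f t ≤ f ⌊t⌋₊ + b ⌊t⌋₊ := by
    filter_upwards [eventually_ge_atTop 0] with t ht
    have hfrac : t - ⌊t⌋₊ ∈ Set.Icc (0 : ℝ) 1 :=
      ⟨sub_nonneg.mpr (Nat.floor_le ht), by linarith [Nat.lt_floor_add_one t]⟩
    simpa using h3 ⌊t⌋₊ _ hfrac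
  exact (limsup_div_eq_limsup_natCast_div h2 hfloor).trans_le h1
end

section
/- Let E and F be real inner product spaces, α > 0, and let u : ℝ → E and v : ℝ → F be differentiable functions such that for all t ∈ [0, 1]: ‖u(t)‖² + ‖v(t)‖² ≤ α²/2, and the function t ↦ √(α² − ‖v(t)‖²) · u(t) is constant on [0, 1]. Then ‖u′(t)‖ ≤ ‖v′(t)‖ for all t ∈ [0, 1]. -/
/-!
Write `w = α² − ‖v‖²` and `g = √w`. Differentiating `g • u = const` at a point of `[0, 1]` gives
`g • u' = −g' • u` with `g' = −⟪v, v'⟫ / g`, hence `w ‖u'‖ = |⟪v, v'⟫| ‖u‖ ≤ ‖u‖ ‖v‖ ‖v'‖`.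
The bound `‖u‖² + ‖v‖² ≤ α²/2` gives `‖u‖ ‖v‖ ≤ α²/4 ≤ w`, so `‖u'‖ ≤ ‖v'‖`.
-/

open Real RealInnerProductSpace

theorem HasDerivAt.eq_zero_of_forall_mem_eq_const {E : Type*} [NormedAddCommGroup E]
    [NormedSpace ℝ E] {f : ℝ → E} {f' c : E} {s : Set ℝ} {t : ℝ} (hf : HasDerivAt f f' t)
    (hs : UniqueDiffWithinAt ℝ s t) (ht : t ∈ s) (hc : ∀ x ∈ s, f x = c) : f' = 0 :=
  hs.eq_deriv s hf.hasDerivWithinAt ((hasDerivWithinAt_const t s c).congr hc (hc t ht))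

theorem HasDerivAt.sqrt_sub_norm_sq {F : Type*} [NormedAddCommGroup F] [InnerProductSpace ℝ F]
    {v : ℝ → F} {v' : F} {a t : ℝ} (hv : HasDerivAt v v' t) (ha : a - ‖v t‖ ^ 2 ≠ 0) :
    HasDerivAt (fun s ↦ √(a - ‖v s‖ ^ 2)) (-⟪v t, v'⟫ / √(a - ‖v t‖ ^ 2)) t := by
  convert (hv.norm_sq.const_sub a).sqrt ha using 1
  field_simp

theorem abs_mul_norm_eq_of_smul_eq_const {E : Type*} [NormedAddCommGroup E] [NormedSpace ℝ E]
    {g : ℝ → ℝ} {u : ℝ → E} {g' : ℝ} {u' c : E} {s : Set ℝ} {t : ℝ}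
    (hg : HasDerivAt g g' t) (hu : HasDerivAt u u' t) (hs : UniqueDiffWithinAt ℝ s t)
    (ht : t ∈ s) (hc : ∀ x ∈ s, g x • u x = c) : |g t| * ‖u'‖ = |g'| * ‖u t‖ := by
  have hzero : g t • u' + g' • u t = 0 := (hg.smul hu).eq_zero_of_forall_mem_eq_const hs ht hc
  rw [← Real.norm_eq_abs, ← Real.norm_eq_abs, ← norm_smul, ← norm_smul,
    eq_neg_of_add_eq_zero_left hzero, norm_neg]

/-- Let `E`, `F` be real inner product spaces, `α > 0`, and let
`u : ℝ → E`, `v : ℝ → F` be differentiable with `‖u t‖² + ‖v t‖² ≤ α²/2` on `[0,1]`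
and `t ↦ √(α² − ‖v t‖²) • u t` constant on `[0,1]`.  Then `‖u′ t‖ ≤ ‖v′ t‖` on `[0,1]`. -/
theorem graph_path_estimate {E F : Type*}
    [NormedAddCommGroup E] [InnerProductSpace ℝ E]
    [NormedAddCommGroup F] [InnerProductSpace ℝ F]
    (α : ℝ) (hα : 0 < α) (u : ℝ → E) (v : ℝ → F)
    (hu : Differentiable ℝ u) (hv : Differentiable ℝ v)
    (hbound : ∀ t ∈ Set.Icc (0 : ℝ) 1, ‖u t‖ ^ 2 + ‖v t‖ ^ 2 ≤ α ^ 2 / 2)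
    (hconst : ∃ c : E, ∀ t ∈ Set.Icc (0 : ℝ) 1,
      Real.sqrt (α ^ 2 - ‖v t‖ ^ 2) • u t = c) :
    ∀ t ∈ Set.Icc (0 : ℝ) 1, ‖deriv u t‖ ≤ ‖deriv v t‖ := by
  intro t ht
  obtain ⟨c, hc⟩ := hconst
  have hbt := hbound t ht
  set w := α ^ 2 - ‖v t‖ ^ 2 with hw_def
  have hw : 0 < w := by nlinarith [sq_nonneg ‖u t‖]
  have huv : ‖u t‖ * ‖v t‖ ≤ w := by nlinarith [sq_nonneg (‖u t‖ - ‖v t‖), sq_nonneg ‖u t‖]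
  have hsqrt : 0 < √w := sqrt_pos.2 hw
  have key := abs_mul_norm_eq_of_smul_eq_const ((hv t).hasDerivAt.sqrt_sub_norm_sq hw.ne')
    (hu t).hasDerivAt (uniqueDiffOn_Icc one_pos t ht) ht hc
  rw [← hw_def, abs_of_pos hsqrt, abs_div, abs_neg, abs_of_pos hsqrt] at key
  have hderiv : w * ‖deriv u t‖ = |⟪v t, deriv v t⟫| * ‖u t‖ := by
    rw [← mul_self_sqrt hw.le, mul_assoc, key]
    field_simp
  refine le_of_mul_le_mul_left ?_ hw
  calc w * ‖deriv u t‖ = |⟪v t, deriv v t⟫| * ‖u t‖ := hderiv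
    _ ≤ ‖v t‖ * ‖deriv v t‖ * ‖u t‖ := by gcongr; exact abs_real_inner_le_norm _ _
    _ = ‖u t‖ * ‖v t‖ * ‖deriv v t‖ := by ring
    _ ≤ w * ‖deriv v t‖ := by gcongr
end

section
/- Let s ≥ 1, let λ : Fin s → ℝ be strictly increasing with all values negative, and let r ≥ 1 be the natural number with (r+1)·λ(s) < λ(1) ≤ r·λ(s) (i.e., r = ⌊λ(1)/λ(s)⌋). Suppose 1 = i₀ < i₁ < ⋯ < i_m ≤ s is a sequence of indices such that for each k with 1 ≤ k ≤ m, i_k is the least index i > i_{k−1} with λ(i_{k−1}) − λ(i) ≤ λ(s). Then λ(i_k) > (r − k + 1)·λ(s) for every 1 ≤ k ≤ m, and consequently m ≤ r − 1 (the conglomeration process terminates after fewer than r steps, producing at most r blocks). -/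
/-!
Each conglomeration step lowers the exponent by at least `|λ(s)|`, so
`λ(i_k) ≥ λ(1) - k·λ(s) > (r - k + 1)·λ(s)`. As `λ(i_m) ≤ λ(s) < 0`, this forces `r - m > 0`.
-/

theorem sub_nsmul_le_of_forall_sub_succ_le {α : Type*} [AddCommGroup α] [PartialOrder α]
    [IsOrderedAddMonoid α] {u : ℕ → α} {d : α} {m : ℕ}
    (h : ∀ k < m, u k - u (k + 1) ≤ d) : ∀ k ≤ m, u 0 - k • d ≤ u k := by
  intro k
  induction k with
  | zero => simp
  | succ k ih =>
    intro hk
    have hstep := h k (by omega)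
    calc u 0 - (k + 1) • d = u 0 - k • d - d := by rw [succ_nsmul, sub_add_eq_sub_sub]
      _ ≤ u k - d := sub_le_sub_right (ih (by omega)) d
      _ ≤ u (k + 1) := sub_le_comm.mp hstep

theorem conglomeration_terminates_general (s : ℕ) (lam : ℕ → ℝ)
    (hmono : ∀ i j, 1 ≤ i → i < j → j ≤ s → lam i < lam j)
    (r : ℕ)
    (hr1 : ((r : ℝ) + 1) * lam s < lam 1) (hr2 : lam 1 ≤ (r : ℝ) * lam s)
    (m : ℕ) (idx : ℕ → ℕ)
    (h0 : idx 0 = 1)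
    (hleast : ∀ k, 1 ≤ k → k ≤ m →
      IsLeast {i : ℕ | idx (k - 1) < i ∧ i ≤ s ∧
        lam (idx (k - 1)) - lam i ≤ lam s} (idx k)) :
    (∀ k, 1 ≤ k → k ≤ m → ((r : ℝ) - k + 1) * lam s < lam (idx k)) ∧
    m ≤ r - 1 := by
  have hbound : ∀ k ≤ m, lam 1 - k * lam s ≤ lam (idx k) := by
    have := sub_nsmul_le_of_forall_sub_succ_le (u := fun k => lam (idx k)) (d := lam s) (m := m)
      fun k hk => (hleast (k + 1) (by omega) hk).1.2.2
    simpa [h0] using this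
  refine ⟨fun k _ hk => by linarith [hbound k hk], ?_⟩
  rcases Nat.eq_zero_or_pos m with rfl | hm
  · omega
  obtain ⟨hprev, hle, -⟩ := (hleast m hm le_rfl).1
  have hlast : lam (idx m) ≤ lam s :=
    hle.eq_or_lt.elim (fun h => h ▸ le_rfl) fun h => (hmono _ _ (by omega) h le_rfl).le
  have hneg : lam s < 0 := by linarith
  have hgap : ((r : ℝ) - m) * lam s < 0 := by linarith [hbound m le_rfl]
  have hmr : m < r := by exact_mod_cast (by nlinarith : (m : ℝ) < r)
  omega

/-- Let `λ(1) < ⋯ < λ(s) < 0`, and let `r ≥ 1` be the natural number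
with `(r+1)·λ(s) < λ(1) ≤ r·λ(s)` (i.e. `r = ⌊λ(1)/λ(s)⌋`).  Suppose
`1 = i₀ < i₁ < ⋯ < i_m ≤ s` is a sequence of indices such that for each
`1 ≤ k ≤ m`, `i_k` is the least index `i > i_{k−1}` with
`λ(i_{k−1}) − λ(i) ≤ λ(s)`.  Then `λ(i_k) > (r − k + 1)·λ(s)` for every
`1 ≤ k ≤ m`, and consequently `m ≤ r − 1`. -/
theorem conglomeration_terminates (s : ℕ) (hs : 1 ≤ s) (lam : ℕ → ℝ)
    (hmono : ∀ i j, 1 ≤ i → i < j → j ≤ s → lam i < lam j)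
    (hneg : ∀ i, 1 ≤ i → i ≤ s → lam i < 0)
    (r : ℕ) (hr : 1 ≤ r)
    (hr1 : ((r : ℝ) + 1) * lam s < lam 1) (hr2 : lam 1 ≤ (r : ℝ) * lam s)
    (m : ℕ) (idx : ℕ → ℕ)
    (h0 : idx 0 = 1)
    (hlt : ∀ k, k < m → idx k < idx (k + 1))
    (hms : idx m ≤ s)
    (hleast : ∀ k, 1 ≤ k → k ≤ m →
      IsLeast {i : ℕ | idx (k - 1) < i ∧ i ≤ s ∧
        lam (idx (k - 1)) - lam i ≤ lam s} (idx k)) :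
    (∀ k, 1 ≤ k → k ≤ m → ((r : ℝ) - k + 1) * lam s < lam (idx k)) ∧
    m ≤ r - 1 :=
  conglomeration_terminates_general s lam hmono r hr1 hr2 m idx h0 hleast
end
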